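/- arXiv:2207.04083 — 3 statements merged into one kernel-verified Lean document; each statement's English description precedes it below -/
import Mathlib

section
/- Let X be an n×n real matrix with XᵀX = Iₙ (orthonormal), let y ∈ ℝⁿ, and define L(α) = ‖y − Xα‖₂ + ‖α‖₂ (i.e., penalty parameter λ = 1). Then for every k ∈ [0,1], the vector α = k·Xᵀy is a global minimizer of L, and L(k·Xᵀy) = ‖y‖₂. -/
open scoped BigOperators

/-- Euclidean norm of a vector in `ℝᵐ`. -/
noncomputable def norm2 {m : ℕ} (v : Fin m → ℝ) : ℝ := Real.sqrt (∑ i, (v i) ^ 2)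

/-- The square-root group-LASSO objective with orthonormal design:
`L(α) = ‖y − Xα‖₂ + λ‖α‖₂`. -/
noncomputable def sqrtGroupLassoObj {n : ℕ} (X : Matrix (Fin n) (Fin n) ℝ)
    (y : Fin n → ℝ) (lam : ℝ) (α : Fin n → ℝ) : ℝ :=
  norm2 (y - X.mulVec α) + lam * norm2 α

/-!
For any `α`, the triangle inequality and the isometry `‖Xα‖₂ = ‖α‖₂` give
`‖y‖₂ ≤ ‖y − Xα‖₂ + ‖Xα‖₂ = L(α)`. Since `XXᵀ = Iₙ` as well, `α = k·Xᵀy` has `Xα = k·y`, so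
`L(α) = (1 − k)‖y‖₂ + k‖y‖₂ = ‖y‖₂` attains this lower bound.
-/

open scoped Matrix

section norm2

variable {m : ℕ}

lemma norm2_eq_norm_toLp (v : Fin m → ℝ) : norm2 v = ‖WithLp.toLp 2 v‖ := by
  simp [EuclideanSpace.norm_eq, norm2, Real.norm_eq_abs, sq_abs]

lemma norm2_smul (c : ℝ) (v : Fin m → ℝ) : norm2 (c • v) = |c| * norm2 v := by
  simp only [norm2_eq_norm_toLp, WithLp.toLp_smul, norm_smul, Real.norm_eq_abs]

lemma norm2_le_norm2_sub_add (a b : Fin m → ℝ) : norm2 a ≤ norm2 (a - b) + norm2 b := by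
  simpa only [norm2_eq_norm_toLp, WithLp.toLp_sub] using norm_le_norm_sub_add _ _

lemma norm2_eq_sqrt_dotProduct (v : Fin m → ℝ) : norm2 v = Real.sqrt (v ⬝ᵥ v) := by
  simp only [norm2, dotProduct, sq]

lemma norm2_mulVec_of_transpose_mul_self_eq_one {n : ℕ} {X : Matrix (Fin m) (Fin n) ℝ}
    (hX : Xᵀ * X = 1) (a : Fin n → ℝ) : norm2 (X *ᵥ a) = norm2 a := by
  rw [norm2_eq_sqrt_dotProduct, norm2_eq_sqrt_dotProduct, Matrix.dotProduct_mulVec,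
    ← Matrix.mulVec_transpose, Matrix.mulVec_mulVec, hX, Matrix.one_mulVec]

end norm2

section sqrtGroupLassoObj

variable {n : ℕ} {X : Matrix (Fin n) (Fin n) ℝ}

lemma norm2_le_sqrtGroupLassoObj_one (hX : Xᵀ * X = 1) (y α : Fin n → ℝ) :
    norm2 y ≤ sqrtGroupLassoObj X y 1 α := by
  rw [sqrtGroupLassoObj, one_mul, ← norm2_mulVec_of_transpose_mul_self_eq_one hX α]
  exact norm2_le_norm2_sub_add y (X *ᵥ α)

lemma sqrtGroupLassoObj_one_smul_transpose_mulVec (hX : X * Xᵀ = 1) (y : Fin n → ℝ)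
    {k : ℝ} (hk : k ∈ Set.Icc (0 : ℝ) 1) :
    sqrtGroupLassoObj X y 1 (k • Xᵀ *ᵥ y) = norm2 y := by
  have hfit : X *ᵥ (k • Xᵀ *ᵥ y) = k • y := by
    rw [Matrix.mulVec_smul, Matrix.mulVec_mulVec, hX, Matrix.one_mulVec]
  have hresidual : y - k • y = (1 - k) • y := by rw [sub_smul, one_smul]
  have hnorm : norm2 (Xᵀ *ᵥ y) = norm2 y :=
    norm2_mulVec_of_transpose_mul_self_eq_one (by rwa [Matrix.transpose_transpose]) y
  rw [sqrtGroupLassoObj, hfit, hresidual, norm2_smul, norm2_smul, hnorm,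
    abs_of_nonneg (sub_nonneg.mpr hk.2), abs_of_nonneg hk.1]
  ring

end sqrtGroupLassoObj

/-- With orthonormal design `XᵀX = Iₙ` and penalty `λ = 1`, for every `k ∈ [0,1]`
the vector `k·Xᵀy` is a global minimizer of `L(α) = ‖y − Xα‖₂ + ‖α‖₂`,
and its objective value is `‖y‖₂`. -/
theorem convexCombination_isMinimizer {n : ℕ} (X : Matrix (Fin n) (Fin n) ℝ)
    (hX : X.transpose * X = 1) (y : Fin n → ℝ)
    (k : ℝ) (hk : k ∈ Set.Icc (0 : ℝ) 1) :
    (∀ α : Fin n → ℝ,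
        sqrtGroupLassoObj X y 1 (k • X.transpose.mulVec y) ≤ sqrtGroupLassoObj X y 1 α) ∧
      sqrtGroupLassoObj X y 1 (k • X.transpose.mulVec y) = norm2 y := by
  have hval := sqrtGroupLassoObj_one_smul_transpose_mulVec (mul_eq_one_comm.mp hX) y hk
  exact ⟨fun α => hval ▸ norm2_le_sqrtGroupLassoObj_one hX y α, hval⟩
end

section
/- Let X be an n×n real matrix with XᵀX = Iₙ (orthonormal), let y ∈ ℝⁿ, and for λ ≥ 0 define L(α) = ‖y − Xα‖₂ + λ‖α‖₂ for α ∈ ℝⁿ. If λ > 1 then α = 0 is the unique global minimizer of L, and if 0 ≤ λ < 1 then α = Xᵀy is the unique global minimizer of L. -/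
/-!
Since `X` is an orthogonal matrix, `y - Xα = X(Xᵀy - α)` and `X` preserves the Euclidean norm,
so with `β = Xᵀy` the objective is `‖β - α‖ + λ‖α‖`. The triangle inequality
`‖β‖ ≤ ‖β - α‖ + ‖α‖` then shows that for `λ > 1` the value `‖β‖` at `α = 0` is beaten
strictly everywhere else, and for `λ < 1` the value `λ‖β‖` at `α = β` is.
-/

open scoped BigOperators

open Matrix

section TriangleBounds

variable {E : Type*} [NormedAddCommGroup E] {lam : ℝ} {β α : E}

theorem norm_le_norm_sub_add_mul_norm (h1 : 1 ≤ lam) : ‖β‖ ≤ ‖β - α‖ + lam * ‖α‖ := by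
  nlinarith [norm_le_norm_add_norm_sub' β α, norm_nonneg α]

theorem norm_lt_norm_sub_add_mul_norm (h1 : 1 < lam) (hα : α ≠ 0) :
    ‖β‖ < ‖β - α‖ + lam * ‖α‖ := by
  nlinarith [norm_le_norm_add_norm_sub' β α, norm_pos_iff.mpr hα]

theorem mul_norm_le_norm_sub_add_mul_norm (h0 : 0 ≤ lam) (h1 : lam ≤ 1) :
    lam * ‖β‖ ≤ ‖β - α‖ + lam * ‖α‖ := by
  nlinarith [norm_le_norm_add_norm_sub' β α, norm_nonneg (β - α)]

theorem mul_norm_lt_norm_sub_add_mul_norm (h0 : 0 ≤ lam) (h1 : lam < 1) (hα : α ≠ β) :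
    lam * ‖β‖ < ‖β - α‖ + lam * ‖α‖ := by
  nlinarith [norm_le_norm_add_norm_sub' β α, norm_pos_iff.mpr (sub_ne_zero.mpr hα.symm)]

end TriangleBounds

theorem norm2_eq_norm {m : ℕ} (v : Fin m → ℝ) : norm2 v = ‖WithLp.toLp 2 v‖ := by
  simp [EuclideanSpace.norm_eq, norm2]

theorem norm2_mulVec_of_transpose_mul_self {m n : ℕ} {X : Matrix (Fin m) (Fin n) ℝ}
    (hX : Xᵀ * X = 1) (v : Fin n → ℝ) : norm2 (X *ᵥ v) = norm2 v := by
  have hsum : ∀ {k : ℕ} (w : Fin k → ℝ), ∑ i, w i ^ 2 = w ⬝ᵥ w := fun w => by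
    simp [dotProduct, sq]
  rw [norm2, norm2, hsum, hsum, dotProduct_mulVec, vecMul_mulVec, ← mulVec_transpose,
    transpose_mul, transpose_transpose, hX, one_mulVec]

theorem sqrtGroupLassoObj_eq_norm {n : ℕ} {X : Matrix (Fin n) (Fin n) ℝ} (hX : Xᵀ * X = 1)
    (y : Fin n → ℝ) (lam : ℝ) (α : Fin n → ℝ) :
    sqrtGroupLassoObj X y lam α =
      ‖WithLp.toLp 2 (Xᵀ *ᵥ y) - WithLp.toLp 2 α‖ + lam * ‖WithLp.toLp 2 α‖ := by
  have hy : X *ᵥ (Xᵀ *ᵥ y - α) = y - X *ᵥ α := by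
    rw [mulVec_sub, mulVec_mulVec, mul_eq_one_comm.mp hX, one_mulVec]
  rw [sqrtGroupLassoObj, ← hy, norm2_mulVec_of_transpose_mul_self hX, norm2_eq_norm,
    norm2_eq_norm, WithLp.toLp_sub]

/-- With orthonormal design `XᵀX = Iₙ`: if `λ > 1` then `0` is the unique global
minimizer of `L(α) = ‖y − Xα‖₂ + λ‖α‖₂`, and if `0 ≤ λ < 1` then `Xᵀy` is the
unique global minimizer. -/
theorem unique_minimizers {n : ℕ} (X : Matrix (Fin n) (Fin n) ℝ)
    (hX : X.transpose * X = 1) (y : Fin n → ℝ) (lam : ℝ) (hlam : 0 ≤ lam) :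
    (1 < lam →
      (∀ α : Fin n → ℝ, sqrtGroupLassoObj X y lam 0 ≤ sqrtGroupLassoObj X y lam α) ∧
      (∀ α : Fin n → ℝ, α ≠ 0 →
        sqrtGroupLassoObj X y lam 0 < sqrtGroupLassoObj X y lam α)) ∧
    (lam < 1 →
      (∀ α : Fin n → ℝ,
        sqrtGroupLassoObj X y lam (X.transpose.mulVec y) ≤ sqrtGroupLassoObj X y lam α) ∧
      (∀ α : Fin n → ℝ, α ≠ X.transpose.mulVec y →
        sqrtGroupLassoObj X y lam (X.transpose.mulVec y) < sqrtGroupLassoObj X y lam α)) := by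
  have toLp_ne {α β : Fin n → ℝ} (h : α ≠ β) : WithLp.toLp 2 α ≠ WithLp.toLp 2 β :=
    (WithLp.toLp_injective 2).ne h
  simp only [sqrtGroupLassoObj_eq_norm hX, WithLp.toLp_zero, sub_zero, sub_self, norm_zero,
    mul_zero, add_zero, zero_add]
  refine ⟨fun h1 => ⟨fun α => ?_, fun α hα => ?_⟩, fun h1 => ⟨fun α => ?_, fun α hα => ?_⟩⟩
  · exact norm_le_norm_sub_add_mul_norm h1.le
  · exact norm_lt_norm_sub_add_mul_norm h1 (by simpa using toLp_ne hα)
  · exact mul_norm_le_norm_sub_add_mul_norm hlam h1.le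
  · exact mul_norm_lt_norm_sub_add_mul_norm hlam h1 (toLp_ne hα)
end

section
/- Let z ∈ ℝᵐ, let λ > 0, and define G(β) = ‖z − β‖₂ + λ‖β‖₁ for β ∈ ℝᵐ. For a threshold t ≥ 0, the soft-thresholding function is η_t(x) = sign(x)·max(|x| − t, 0) for x ∈ ℝ, applied componentwise to vectors. Then for any β ∈ ℝᵐ with β ≠ z, the vector β is a global minimizer of G if and only if β_i = η_{λ‖z−β‖₂}(z_i) for every i = 1,…,m. -/
open scoped BigOperators

/-- ℓ1-norm of a vector in `ℝᵐ`. -/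
noncomputable def norm1 {m : ℕ} (v : Fin m → ℝ) : ℝ := ∑ i, |v i|

/-- Soft-thresholding with threshold `t`: `η_t(x) = sign(x)·max(|x| − t, 0)`. -/
noncomputable def soft (t x : ℝ) : ℝ := Real.sign x * max (|x| - t) 0

/-- The square-root soft-waveshrink objective in the orthonormal wavelet domain:
`G(β) = ‖z − β‖₂ + λ‖β‖₁`. -/
noncomputable def srswObj {m : ℕ} (z : Fin m → ℝ) (lam : ℝ) (β : Fin m → ℝ) : ℝ :=
  norm2 (z - β) + lam * norm1 β

/-!
Write `u = z - β` and `r = ‖u‖₂ > 0`. The fixed-point equation `βᵢ = η_{λr}(zᵢ)` says exactly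
that `uᵢ ∈ λr · ∂|·|(βᵢ)`, i.e. `|uᵢ| ≤ λr` and `uᵢ βᵢ = λr |βᵢ|`.

If this holds, then for every `γ`, Cauchy–Schwarz and `uᵢ γᵢ ≤ λr |γᵢ|` give
`r² + λr‖β‖₁ = ⟪u, z⟫ = ⟪u, z - γ⟫ + ⟪u, γ⟫ ≤ r‖z - γ‖₂ + λr‖γ‖₁`, so `G(β) ≤ G(γ)`.

Conversely, moving only the `i`-th coordinate of a minimizer by `t` and bounding the square
root by its tangent at `r²` yields `uᵢ t ≤ t²/2 + λr (|βᵢ + t| - |βᵢ|)` for all `t`;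
comparing one-sided slopes at `t = 0` forces `uᵢ ∈ λr · ∂|·|(βᵢ)`.
-/

open Filter Topology Function

theorem soft_of_abs_le {t x : ℝ} (h : |x| ≤ t) : soft t x = 0 := by
  simp [soft, max_eq_right (sub_nonpos.mpr h)]

theorem soft_of_lt {t x : ℝ} (ht : 0 ≤ t) (h : t < x) : soft t x = x - t := by
  rw [soft, Real.sign_of_pos (by linarith), abs_of_pos (by linarith), max_eq_left (by linarith),
    one_mul]

theorem soft_of_lt_neg {t x : ℝ} (ht : 0 ≤ t) (h : x < -t) : soft t x = x + t := by
  rw [soft, Real.sign_of_neg (by linarith), abs_of_neg (by linarith), max_eq_left (by linarith)]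
  ring

theorem eq_soft_iff {t x b : ℝ} (ht : 0 ≤ t) :
    b = soft t x ↔ |x - b| ≤ t ∧ (x - b) * b = t * |b| := by
  constructor
  · rintro rfl
    rcases le_or_gt |x| t with hx | hx
    · simpa [soft_of_abs_le hx] using hx
    rcases lt_abs.mp hx with hx | hx
    · rw [soft_of_lt ht hx, sub_sub_cancel, abs_of_nonneg ht, abs_of_pos (by linarith)]
      exact ⟨le_rfl, rfl⟩
    · rw [soft_of_lt_neg ht (by linarith), sub_add_cancel_left, abs_neg, abs_of_nonneg ht,
        abs_of_neg (by linarith)]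
      exact ⟨le_rfl, by ring⟩
  · rintro ⟨hle, heq⟩
    rcases lt_trichotomy b 0 with hb | rfl | hb
    · rw [abs_of_neg hb] at heq
      have : x - b = -t := by nlinarith
      rw [soft_of_lt_neg ht (by linarith)]
      linarith
    · simpa using (soft_of_abs_le (by simpa using hle)).symm
    · rw [abs_of_pos hb] at heq
      have : x - b = t := by nlinarith
      rw [soft_of_lt ht (by linarith)]
      linarith

theorem sum_comp_update {ι α M : Type*} [Fintype ι] [DecidableEq ι] [AddCommGroup M]
    (g : α → M) (f : ι → α) (i : ι) (x : α) :
    ∑ j, g (update f i x j) = ∑ j, g (f j) - g (f i) + g x := by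
  have := Finset.sum_update_of_mem (Finset.mem_univ i) (g ∘ f) (g x)
  rw [← comp_update] at this
  simp only [comp_apply] at this
  rw [this, Finset.sum_eq_add_sum_sdiff_singleton_of_mem (Finset.mem_univ i) (fun j => g (f j))]
  abel

theorem le_of_forall_mul_le_sq_add {c e K δ : ℝ} (hδ : 0 < δ)
    (h : ∀ s, 0 < s → s ≤ δ → c * s ≤ K * s ^ 2 + e * s) : c ≤ e := by
  have hlim : Tendsto (fun s => e + K * s) (𝓝[>] 0) (𝓝 e) := by
    have : Continuous (fun s : ℝ => e + K * s) := by fun_prop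
    simpa using (this.tendsto 0).mono_left nhdsWithin_le_nhds
  refine ge_of_tendsto hlim ?_
  filter_upwards [Ioc_mem_nhdsGT hδ] with s ⟨hs0, hsδ⟩
  exact le_of_mul_le_mul_right (by linarith [h s hs0 hsδ]) hs0

section

variable {a b K T : ℝ}

theorem le_of_forall_mul_le_abs_add (hb : 0 ≤ b)
    (h : ∀ t, a * t ≤ K * t ^ 2 + T * (|b + t| - |b|)) : a ≤ T :=
  le_of_forall_mul_le_sq_add one_pos fun s hs _ => by
    have := h s
    rwa [abs_of_nonneg (by linarith : 0 ≤ b + s), abs_of_nonneg hb, add_sub_cancel_left]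
      at this

theorem ge_of_forall_mul_le_abs_add_of_pos (hb : 0 < b)
    (h : ∀ t, a * t ≤ K * t ^ 2 + T * (|b + t| - |b|)) : T ≤ a :=
  le_of_forall_mul_le_sq_add (K := K) hb fun s _ hsb => by
    have := h (-s)
    rw [abs_of_nonneg (by linarith : 0 ≤ b + -s), abs_of_pos hb] at this
    linarith

theorem abs_le_and_mul_eq_of_forall_mul_le (hT : 0 ≤ T)
    (h : ∀ t, a * t ≤ K * t ^ 2 + T * (|b + t| - |b|)) : |a| ≤ T ∧ a * b = T * |b| := by
  have hneg : ∀ t, -a * t ≤ K * t ^ 2 + T * (|-b + t| - |-b|) := fun t => by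
    have := h (-t)
    rw [neg_add_eq_sub, abs_sub_comm, abs_neg]
    rw [neg_sq, ← sub_eq_add_neg] at this
    linarith
  rcases lt_trichotomy b 0 with hb | rfl | hb
  · have := le_antisymm (le_of_forall_mul_le_abs_add (by linarith) hneg)
      (ge_of_forall_mul_le_abs_add_of_pos (by linarith) hneg)
    rw [show a = -T by linarith, abs_neg, abs_of_nonneg hT, abs_of_neg hb]
    exact ⟨le_rfl, by ring⟩
  · refine ⟨abs_le.2 ⟨?_, le_of_forall_mul_le_abs_add le_rfl h⟩, by simp⟩
    linarith [le_of_forall_mul_le_abs_add (by simp) hneg]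
  · have := le_antisymm (le_of_forall_mul_le_abs_add hb.le h)
      (ge_of_forall_mul_le_abs_add_of_pos hb h)
    rw [this, abs_of_nonneg hT, abs_of_pos hb]
    exact ⟨le_rfl, rfl⟩

end

theorem norm2_sq {m : ℕ} (v : Fin m → ℝ) : norm2 v ^ 2 = ∑ i, v i ^ 2 :=
  Real.sq_sqrt (Finset.sum_nonneg fun _ _ => sq_nonneg _)

theorem norm2_pos {m : ℕ} {v : Fin m → ℝ} (hv : v ≠ 0) : 0 < norm2 v := by
  obtain ⟨j, hj⟩ := Function.ne_iff.1 hv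
  exact Real.sqrt_pos.2 <| Finset.sum_pos' (fun _ _ => sq_nonneg _)
    ⟨j, Finset.mem_univ j, sq_pos_of_ne_zero hj⟩

theorem sum_mul_le_norm2_mul_norm2 {m : ℕ} (u v : Fin m → ℝ) :
    ∑ i, u i * v i ≤ norm2 u * norm2 v :=
  Real.sum_mul_le_sqrt_mul_sqrt _ _ _

section

variable {m : ℕ} {z β : Fin m → ℝ} {lam : ℝ}

theorem mul_le_of_forall_srswObj_le (hr : 0 < norm2 (z - β))
    (hmin : ∀ γ, srswObj z lam β ≤ srswObj z lam γ) (i : Fin m) (t : ℝ) :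
    (z i - β i) * t ≤ 1 / 2 * t ^ 2 + lam * norm2 (z - β) * (|β i + t| - |β i|) := by
  set r := norm2 (z - β)
  set γ := update β i (β i + t)
  have hγ1 : norm1 γ = norm1 β - |β i| + |β i + t| := by
    simp only [norm1, γ, sum_comp_update]
  have hγ2 : norm2 (z - γ) ^ 2 = r ^ 2 - (z i - β i) ^ 2 + (z i - β i - t) ^ 2 := by
    have : z - γ = update (z - β) i (z i - β i - t) := by
      ext j; rcases eq_or_ne j i with rfl | hj <;> simp [γ, *]; ring
    rw [norm2_sq, norm2_sq, this, sum_comp_update (· ^ 2)]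
    simp
  -- `2 r ‖z - γ‖₂ ≤ r² + ‖z - γ‖₂²`: the square root lies below its tangent at `r²`
  have hamgm := two_mul_le_add_sq r (norm2 (z - γ))
  have hmin' := mul_le_mul_of_nonneg_left (hmin γ) hr.le
  rw [srswObj, srswObj, hγ1] at hmin'
  linarith

theorem srswObj_le_of_forall_abs_le (hr : 0 < norm2 (z - β))
    (h : ∀ i, |z i - β i| ≤ lam * norm2 (z - β) ∧
      (z i - β i) * β i = lam * norm2 (z - β) * |β i|)
    (γ : Fin m → ℝ) : srswObj z lam β ≤ srswObj z lam γ := by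
  set r := norm2 (z - β)
  have hβ : ∑ i, (z i - β i) * β i = lam * r * norm1 β := by
    rw [norm1, Finset.mul_sum]
    exact Finset.sum_congr rfl fun i _ => (h i).2
  have hγ : ∑ i, (z i - β i) * γ i ≤ lam * r * norm1 γ := by
    rw [norm1, Finset.mul_sum]
    refine Finset.sum_le_sum fun i _ => ?_
    calc (z i - β i) * γ i ≤ |z i - β i| * |γ i| := by rw [← abs_mul]; exact le_abs_self _
      _ ≤ lam * r * |γ i| := mul_le_mul_of_nonneg_right (h i).1 (abs_nonneg _)
  have hcs := sum_mul_le_norm2_mul_norm2 (z - β) (z - γ)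
  have hr2 := norm2_sq (z - β)
  simp only [Pi.sub_apply] at hcs hr2
  have hsplit : ∑ i, (z i - β i) ^ 2 + ∑ i, (z i - β i) * β i =
      ∑ i, (z i - β i) * (z i - γ i) + ∑ i, (z i - β i) * γ i := by
    simp only [← Finset.sum_add_distrib]
    exact Finset.sum_congr rfl fun i _ => by ring
  refine le_of_mul_le_mul_left ?_ hr
  rw [srswObj, srswObj]
  linarith

end

/-- For `λ > 0` and `β ≠ z`, the vector `β` is a global minimizer of
`G(β) = ‖z − β‖₂ + λ‖β‖₁` iff it satisfies the fixed-point soft-thresholding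
equation `βᵢ = η_{λ‖z−β‖₂}(zᵢ)` for every `i`. -/
theorem minimizer_iff_fixedPoint_srsw {m : ℕ} (z : Fin m → ℝ)
    (lam : ℝ) (hlam : 0 < lam) (β : Fin m → ℝ) (hβ : β ≠ z) :
    (∀ γ : Fin m → ℝ, srswObj z lam β ≤ srswObj z lam γ) ↔
      (∀ i, β i = soft (lam * norm2 (z - β)) (z i)) := by
  have hr : 0 < norm2 (z - β) := norm2_pos (sub_ne_zero.2 hβ.symm)
  have hT : 0 ≤ lam * norm2 (z - β) := by positivity
  simp only [eq_soft_iff hT]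
  exact ⟨fun hmin i =>
    abs_le_and_mul_eq_of_forall_mul_le hT (mul_le_of_forall_srswObj_le hr hmin i),
    srswObj_le_of_forall_abs_le hr⟩
end
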